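/- arXiv:0902.2535 — 5 statements merged into one kernel-verified Lean document; each statement's English description precedes it below -/
import Mathlib

section
/- The derivation action of Ψ on itself vanishes: Ψ.Ψ = 0, i.e., for all U, V ∈ V the endomorphism Ψ(U,V) annihilates the 4-multilinear form Ψ₀(X,Y,Z,W) = ⟪Ψ(X,Y)Z, W⟫ under the derivation action. -/
/-!
Put `K = J ∘ π`. Since `J` is skew-adjoint and `D` is `J`-invariant, `K` is skew-adjoint and
`ω(X, Y) = ⟪K X, Y⟫`, so `Ψ(U, V) = ω(U, V) • (-K)` and `Ψ₀(X, Y, Z, W) = -ω(X, Y) ω(Z, W)`.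
Every `Ψ(U, V)` is a multiple of `K`, hence a skew-adjoint endomorphism commuting with `K`, and
such an endomorphism `A` preserves `ω`: `ω(A X, Y) + ω(X, A Y) = ⟪A K X, Y⟫ + ⟪K X, A Y⟫ = 0`.
By the Leibniz rule for the derivation action, `Ψ(U, V)` then annihilates `ω ⊗ ω`.
-/

open scoped RealInnerProductSpace

noncomputable section

variable {V : Type*} [NormedAddCommGroup V] [InnerProductSpace ℝ V] [FiniteDimensional ℝ V]

/-- The orthogonal projection onto `D`, as a map `V → V`. -/
def projD (D : Submodule ℝ V) (X : V) : V := (D.orthogonalProjection X : V)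

/-- The bilinear form `h(X,Y) = ⟪πX, πY⟫`. -/
def hForm (D : Submodule ℝ V) (X Y : V) : ℝ := ⟪projD D X, projD D Y⟫

/-- The 2-form `ω(X,Y) = h(JX, Y)`. -/
def omForm (J : V →ₗ[ℝ] V) (D : Submodule ℝ V) (X Y : V) : ℝ := hForm D (J X) Y

/-- The standard Kähler curvature-type tensor `Π` of constant holomorphic sectional curvature. -/
def PiT (J : V →ₗ[ℝ] V) (U Vv W : V) : V :=
  (1/4 : ℝ) • (⟪Vv, W⟫ • U - ⟪U, W⟫ • Vv + ⟪J Vv, W⟫ • J U - ⟪J U, W⟫ • J Vv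
    - (2 * ⟪J U, Vv⟫) • J W)

/-- The curvature-type tensor `Φ`. -/
def PhiT (J : V →ₗ[ℝ] V) (D : Submodule ℝ V) (U Vv W : V) : V :=
  (1/8 : ℝ) • (⟪Vv, W⟫ • projD D U - ⟪U, W⟫ • projD D Vv
    + hForm D Vv W • U - hForm D U W • Vv
    + ⟪J Vv, W⟫ • projD D (J U) - ⟪J U, W⟫ • projD D (J Vv)
    + omForm J D Vv W • J U - omForm J D U W • J Vv
    - (2 * ⟪J U, Vv⟫) • projD D (J W) - (2 * omForm J D U Vv) • J W)

/-- The curvature-type tensor `Ψ(U,V)W = −ω(U,V)·J(πW)`. -/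
def PsiT (J : V →ₗ[ℝ] V) (D : Submodule ℝ V) (U Vv W : V) : V :=
  -(omForm J D U Vv) • J (projD D W)

/-- The derivation action of an endomorphism `A` on a bilinear form `T`. -/
def der2 (A : V → V) (T : V → V → ℝ) (X Y : V) : ℝ := -T (A X) Y - T X (A Y)

/-- The derivation action of an endomorphism `A` on a 4-multilinear form `T`. -/
def der4 (A : V → V) (T : V → V → V → V → ℝ) (X Y Z W : V) : ℝ :=
  -T (A X) Y Z W - T X (A Y) Z W - T X Y (A Z) W - T X Y Z (A W)

/-- The 4-form `S₀(X,Y,Z,W) = ⟪S(X,Y)Z, W⟫` associated with an endomorphism-valued 2-form. -/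
def form4 (S : V → V → V → V) (X Y Z W : V) : ℝ := ⟪S X Y Z, W⟫

/-- The 6-multilinear form `(R.S)(U,V,X,Y,Z,W) = (R(U,V).S₀)(X,Y,Z,W)`. -/
def dotRS (R S : V → V → V → V) (U Vv X Y Z W : V) : ℝ :=
  der4 (R U Vv) (form4 S) X Y Z W

def innerSMulTensor {E : Type*} [NormedAddCommGroup E] [InnerProductSpace ℝ E]
    (K L : E →ₗ[ℝ] E) (U Vv W : E) : E :=
  ⟪K U, Vv⟫ • L W

theorem der4_mul {E : Type*} (A : E → E) (S T : E → E → ℝ) (X Y Z W : E) :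
    der4 A (fun X Y Z W => S X Y * T Z W) X Y Z W =
      der2 A S X Y * T Z W + S X Y * der2 A T Z W := by
  simp only [der4, der2]
  ring

section SkewAdjoint

variable {E : Type*} [NormedAddCommGroup E] [InnerProductSpace ℝ E]

theorem der2_inner_eq_zero_of_commute {A K : E →ₗ[ℝ] E}
    (hA : ∀ x y, ⟪A x, y⟫ = -⟪x, A y⟫) (hAK : Commute A K) (x y : E) :
    der2 A (fun x y => ⟪K x, y⟫) x y = 0 := by
  have hKA : K (A x) = A (K x) := LinearMap.congr_fun hAK.eq.symm x
  simp only [der2, hKA, hA, neg_neg, sub_self]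

theorem form4_innerSMulTensor (K L : E →ₗ[ℝ] E) :
    form4 (innerSMulTensor K L) = fun X Y Z W => ⟪K X, Y⟫ * ⟪L Z, W⟫ := by
  funext X Y Z W
  exact real_inner_smul_left _ _ _

theorem dotRS_innerSMulTensor_self {K L : E →ₗ[ℝ] E} (hL : ∀ x y, ⟪L x, y⟫ = -⟪x, L y⟫)
    (hKL : Commute K L) (U Vv X Y Z W : E) :
    dotRS (innerSMulTensor K L) (innerSMulTensor K L) U Vv X Y Z W = 0 := by
  set A : E →ₗ[ℝ] E := ⟪K U, Vv⟫ • L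
  have hA : ∀ x y, ⟪A x, y⟫ = -⟪x, A y⟫ := fun x y => by
    simp only [A, LinearMap.smul_apply, real_inner_smul_left, real_inner_smul_right, hL, mul_neg]
  have hAK : Commute A K := hKL.symm.smul_left _
  have hAL : Commute A L := (Commute.refl L).smul_left _
  change der4 A (form4 (innerSMulTensor K L)) X Y Z W = 0
  rw [form4_innerSMulTensor, der4_mul, der2_inner_eq_zero_of_commute hA hAK,
    der2_inner_eq_zero_of_commute hA hAL, zero_mul, mul_zero, add_zero]

theorem inner_apply_left_of_complexStructure {J : E →ₗ[ℝ] E} (hJ2 : ∀ X : E, J (J X) = -X)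
    (hJg : ∀ X Y : E, ⟪J X, J Y⟫ = ⟪X, Y⟫) (X Y : E) : ⟪J X, Y⟫ = -⟪X, J Y⟫ := by
  rw [← hJg, hJ2, inner_neg_left]

end SkewAdjoint

section Kahler

variable (J : V →ₗ[ℝ] V) (D : Submodule ℝ V)

def jProj : V →ₗ[ℝ] V := J ∘ₗ (D.starProjection : V →ₗ[ℝ] V)

theorem jProj_apply (X : V) : jProj J D X = J (projD D X) := rfl

theorem projD_mem (X : V) : projD D X ∈ D := D.starProjection_apply_mem X

theorem inner_projD_of_mem_right {d : V} (hd : d ∈ D) (X : V) : ⟪projD D X, d⟫ = ⟪X, d⟫ :=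
  D.inner_orthogonalProjectionOnto_eq_of_mem_right ⟨d, hd⟩ X

theorem inner_projD_of_mem_left {d : V} (hd : d ∈ D) (X : V) : ⟪d, projD D X⟫ = ⟪d, X⟫ :=
  D.inner_orthogonalProjectionOnto_eq_of_mem_left ⟨d, hd⟩ X

variable {J D}

theorem inner_jProj_left (hJ2 : ∀ X : V, J (J X) = -X) (hJg : ∀ X Y : V, ⟪J X, J Y⟫ = ⟪X, Y⟫)
    (hJD : ∀ X ∈ D, J X ∈ D) (X Y : V) :
    ⟪jProj J D X, Y⟫ = -⟪X, jProj J D Y⟫ := by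
  have hmem : ∀ X : V, J (projD D X) ∈ D := fun X => hJD _ (projD_mem D X)
  simp only [jProj_apply]
  calc ⟪J (projD D X), Y⟫ = ⟪J (projD D X), projD D Y⟫ :=
        (inner_projD_of_mem_left D (hmem X) Y).symm
    _ = -⟪X, J (projD D Y)⟫ := by
        rw [inner_apply_left_of_complexStructure hJ2 hJg, inner_projD_of_mem_right D (hmem Y)]

theorem omForm_eq_inner_jProj (hJ2 : ∀ X : V, J (J X) = -X)
    (hJg : ∀ X Y : V, ⟪J X, J Y⟫ = ⟪X, Y⟫) (hJD : ∀ X ∈ D, J X ∈ D) (X Y : V) :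
    omForm J D X Y = ⟪jProj J D X, Y⟫ := by
  rw [omForm, hForm, inner_projD_of_mem_right D (projD_mem D Y),
    inner_apply_left_of_complexStructure hJ2 hJg, ← jProj_apply, inner_jProj_left hJ2 hJg hJD]

theorem PsiT_eq_innerSMulTensor (hJ2 : ∀ X : V, J (J X) = -X)
    (hJg : ∀ X Y : V, ⟪J X, J Y⟫ = ⟪X, Y⟫) (hJD : ∀ X ∈ D, J X ∈ D) :
    PsiT J D = innerSMulTensor (jProj J D) (-jProj J D) := by
  funext U Vv W
  simp only [PsiT, innerSMulTensor, omForm_eq_inner_jProj hJ2 hJg hJD, LinearMap.neg_apply,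
    jProj_apply, neg_smul, smul_neg]

end Kahler

theorem stmt_1_general {V : Type*} [NormedAddCommGroup V] [InnerProductSpace ℝ V]
    [FiniteDimensional ℝ V]
    (J : V →ₗ[ℝ] V) (hJ2 : ∀ X : V, J (J X) = -X)
    (hJg : ∀ X Y : V, ⟪J X, J Y⟫ = ⟪X, Y⟫)
    (D : Submodule ℝ V)
    (hJD : ∀ X ∈ D, J X ∈ D) :
    ∀ U Vv X Y Z W : V,
      dotRS (PsiT J D) (PsiT J D) U Vv X Y Z W = 0 := by
  have hskew : ∀ X Y : V, ⟪(-jProj J D) X, Y⟫ = -⟪X, (-jProj J D) Y⟫ := fun X Y => by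
    simp only [LinearMap.neg_apply, inner_neg_left, inner_neg_right, inner_jProj_left hJ2 hJg hJD]
  rw [PsiT_eq_innerSMulTensor hJ2 hJg hJD]
  exact dotRS_innerSMulTensor_self hskew (Commute.refl _).neg_right

theorem stmt_1 {V : Type*} [NormedAddCommGroup V] [InnerProductSpace ℝ V]
    [FiniteDimensional ℝ V]
    (J : V →ₗ[ℝ] V) (hJ2 : ∀ X : V, J (J X) = -X)
    (hJg : ∀ X Y : V, ⟪J X, J Y⟫ = ⟪X, Y⟫)
    (D : Submodule ℝ V) (hD2 : Module.finrank ℝ ↥D = 2)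
    (hJD : ∀ X ∈ D, J X ∈ D) :
    ∀ U Vv X Y Z W : V,
      dotRS (PsiT J D) (PsiT J D) U Vv X Y Z W = 0 :=
  stmt_1_general J hJ2 hJg D hJD
end
end

section
/- The derivation action of Ψ annihilates both Π and Φ: Ψ.Π = 0 and Ψ.Φ = 0. -/
open scoped RealInnerProductSpace

noncomputable section

variable {V : Type*} [NormedAddCommGroup V] [InnerProductSpace ℝ V] [FiniteDimensional ℝ V]

/-! `Ψ(U,V) = -ω(U,V) • (J ∘ π)` is skew-adjoint and commutes with `J` and `π`, so its derivation
action kills the four 2-forms `⟪·,·⟫`, `⟪J·,·⟫`, `h` and `ω`. Both `Π₀` and `Φ₀` are linear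
combinations of products of two of these forms placed on complementary pairs of slots, and the
derivation action is linear and obeys the Leibniz rule on such products. -/

section Forms

variable {E : Type*}

def mul12 (a b : E → E → ℝ) (X Y Z W : E) : ℝ := a X Y * b Z W

def mul13 (a b : E → E → ℝ) (X Y Z W : E) : ℝ := a X Z * b Y W

def mul14 (a b : E → E → ℝ) (X Y Z W : E) : ℝ := a X W * b Y Z

variable (A : E → E)

theorem der4_add (S T : E → E → E → E → ℝ) : der4 A (S + T) = der4 A S + der4 A T := by
  funext X Y Z W
  simp only [der4, Pi.add_apply]
  ring

theorem der4_sub (S T : E → E → E → E → ℝ) : der4 A (S - T) = der4 A S - der4 A T := by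
  funext X Y Z W
  simp only [der4, Pi.sub_apply]
  ring

theorem der4_smul (c : ℝ) (T : E → E → E → E → ℝ) : der4 A (c • T) = c • der4 A T := by
  funext X Y Z W
  simp only [der4, Pi.smul_apply, smul_eq_mul]
  ring

theorem der4_mul12 (a b : E → E → ℝ) :
    der4 A (mul12 a b) = mul12 (der2 A a) b + mul12 a (der2 A b) := by
  funext X Y Z W
  simp only [der4, der2, mul12, Pi.add_apply]
  ring

theorem der4_mul13 (a b : E → E → ℝ) :
    der4 A (mul13 a b) = mul13 (der2 A a) b + mul13 a (der2 A b) := by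
  funext X Y Z W
  simp only [der4, der2, mul13, Pi.add_apply]
  ring

theorem der4_mul14 (a b : E → E → ℝ) :
    der4 A (mul14 a b) = mul14 (der2 A a) b + mul14 a (der2 A b) := by
  funext X Y Z W
  simp only [der4, der2, mul14, Pi.add_apply]
  ring

variable {A}

theorem der2_comp_of_commute {a : E → E → ℝ} {J : E → E} (ha : der2 A a = 0)
    (hAJ : ∀ X, A (J X) = J (A X)) : der2 A (a ∘ J) = 0 := by
  funext X Y
  have := congrFun (congrFun ha (J X)) Y
  simp only [der2, Pi.zero_apply] at this ⊢
  simpa only [Function.comp_apply, hAJ] using this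

variable [NormedAddCommGroup E] [InnerProductSpace ℝ E]

theorem der2_inner_of_skew (hA : ∀ X Y, ⟪A X, Y⟫ = -⟪X, A Y⟫) : der2 A (inner ℝ) = 0 := by
  funext X Y
  simp only [der2, hA, Pi.zero_apply]
  ring

theorem inner_map_left_eq_neg {J : E → E} (hJ2 : ∀ X, J (J X) = -X)
    (hJg : ∀ X Y, ⟪J X, J Y⟫ = ⟪X, Y⟫) (X Y : E) : ⟪J X, Y⟫ = -⟪X, J Y⟫ := by
  rw [← hJg, hJ2, inner_neg_left]

theorem form4_PiT (J : E →ₗ[ℝ] E) :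
    form4 (PiT J) = (1/4 : ℝ) • (mul14 (inner ℝ) (inner ℝ) - mul13 (inner ℝ) (inner ℝ)
    + mul14 (inner ℝ ∘ J) (inner ℝ ∘ J) - mul13 (inner ℝ ∘ J) (inner ℝ ∘ J)
    - (2 : ℝ) • mul12 (inner ℝ ∘ J) (inner ℝ ∘ J)) := by
  funext X Y Z W
  simp only [form4, PiT, mul12, mul13, mul14, Function.comp_apply, Pi.smul_apply, Pi.add_apply,
    Pi.sub_apply, smul_eq_mul, inner_add_left, inner_sub_left, real_inner_smul_left]
  ring

theorem der4_form4_PiT_eq_zero {J : E →ₗ[ℝ] E} (hg : der2 A (inner ℝ) = 0)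
    (hJ : der2 A (inner ℝ ∘ J) = 0) : der4 A (form4 (PiT J)) = 0 := by
  rw [form4_PiT]
  simp only [der4_add, der4_sub, der4_smul, der4_mul12, der4_mul13, der4_mul14, hg, hJ]
  funext X Y Z W
  simp [mul12, mul13, mul14]

end Forms

section Projection

variable {D : Submodule ℝ V}

theorem projD_projD (X : V) : projD D (projD D X) = projD D X :=
  Submodule.starProjection_eq_self_iff.2 (D.starProjection_apply_mem X)

theorem projD_smul (c : ℝ) (X : V) : projD D (c • X) = c • projD D X :=
  map_smul D.starProjection c X

theorem inner_projD_left (X Y : V) : ⟪projD D X, Y⟫ = ⟪X, projD D Y⟫ :=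
  D.inner_starProjection_left_eq_right X Y

theorem inner_projD_left_eq_hForm (X Y : V) : ⟪projD D X, Y⟫ = hForm D X Y := by
  rw [hForm, ← inner_projD_left, projD_projD]

theorem projD_map_comm {J : V →ₗ[ℝ] V} (hJD : ∀ X ∈ D, J X ∈ D)
    (hJ : ∀ X Y, ⟪J X, Y⟫ = -⟪X, J Y⟫) (X : V) : projD D (J X) = J (projD D X) := by
  refine Submodule.eq_starProjection_of_mem_of_inner_eq_zero
    (hJD _ (D.starProjection_apply_mem X)) fun w hw => ?_
  rw [← map_sub, hJ, neg_eq_zero]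
  exact D.starProjection_inner_eq_zero X (J w) (hJD w hw)

theorem der2_hForm_of_skew {A : V → V} (hA : ∀ X Y, ⟪A X, Y⟫ = -⟪X, A Y⟫)
    (hAD : ∀ X, projD D (A X) = A (projD D X)) : der2 A (hForm D) = 0 := by
  funext X Y
  simp only [der2, hForm, hAD, hA, Pi.zero_apply]
  ring

end Projection

theorem form4_PhiT (J : V →ₗ[ℝ] V) (D : Submodule ℝ V) :
    form4 (PhiT J D) = (1/8 : ℝ) • (mul14 (hForm D) (inner ℝ)
    - mul13 (hForm D) (inner ℝ) + mul14 (inner ℝ) (hForm D) - mul13 (inner ℝ) (hForm D)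
    + mul14 (omForm J D) (inner ℝ ∘ J) - mul13 (omForm J D) (inner ℝ ∘ J)
    + mul14 (inner ℝ ∘ J) (omForm J D) - mul13 (inner ℝ ∘ J) (omForm J D)
    - (2 : ℝ) • mul12 (inner ℝ ∘ J) (omForm J D) - (2 : ℝ) • mul12 (omForm J D) (inner ℝ ∘ J)) := by
  funext X Y Z W
  simp only [form4, PhiT, mul12, mul13, mul14, Function.comp_apply, Pi.smul_apply, Pi.add_apply,
    Pi.sub_apply, smul_eq_mul, inner_add_left, inner_sub_left, real_inner_smul_left,
    inner_projD_left_eq_hForm, omForm]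
  ring

theorem der4_form4_PhiT_eq_zero {J : V →ₗ[ℝ] V} {D : Submodule ℝ V} {A : V → V}
    (hg : der2 A (inner ℝ) = 0) (hJ : der2 A (inner ℝ ∘ J) = 0) (hh : der2 A (hForm D) = 0)
    (hω : der2 A (omForm J D) = 0) : der4 A (form4 (PhiT J D)) = 0 := by
  rw [form4_PhiT]
  simp only [der4_add, der4_sub, der4_smul, der4_mul12, der4_mul13, der4_mul14, hg, hJ, hh, hω]
  funext X Y Z W
  simp [mul12, mul13, mul14]

section Psi

variable {J : V →ₗ[ℝ] V} {D : Submodule ℝ V} (U Vv : V)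

theorem inner_PsiT_left (hJ : ∀ X Y, ⟪J X, Y⟫ = -⟪X, J Y⟫)
    (hDJ : ∀ X, projD D (J X) = J (projD D X)) (X Y : V) :
    ⟪PsiT J D U Vv X, Y⟫ = -⟪X, PsiT J D U Vv Y⟫ := by
  simp only [PsiT, real_inner_smul_left, real_inner_smul_right, hJ, inner_projD_left, hDJ]
  ring

theorem PsiT_map_comm (hDJ : ∀ X, projD D (J X) = J (projD D X)) (X : V) :
    PsiT J D U Vv (J X) = J (PsiT J D U Vv X) := by
  simp only [PsiT, hDJ, map_smul]

theorem projD_PsiT (hDJ : ∀ X, projD D (J X) = J (projD D X)) (X : V) :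
    projD D (PsiT J D U Vv X) = PsiT J D U Vv (projD D X) := by
  simp only [PsiT, projD_smul, hDJ, projD_projD]

end Psi

theorem stmt_2_general {V : Type*} [NormedAddCommGroup V] [InnerProductSpace ℝ V]
    [FiniteDimensional ℝ V]
    (J : V →ₗ[ℝ] V) (hJ2 : ∀ X : V, J (J X) = -X)
    (hJg : ∀ X Y : V, ⟪J X, J Y⟫ = ⟪X, Y⟫)
    (D : Submodule ℝ V)
    (hJD : ∀ X ∈ D, J X ∈ D) :
    (∀ U Vv X Y Z W : V, dotRS (PsiT J D) (PiT J) U Vv X Y Z W = 0) ∧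
    (∀ U Vv X Y Z W : V, dotRS (PsiT J D) (PhiT J D) U Vv X Y Z W = 0) := by
  have hJ := inner_map_left_eq_neg hJ2 hJg
  have hDJ := projD_map_comm hJD hJ
  have hg U Vv := der2_inner_of_skew (inner_PsiT_left U Vv hJ hDJ)
  have hΩ U Vv := der2_comp_of_commute (hg U Vv) (PsiT_map_comm U Vv hDJ)
  have hh U Vv := der2_hForm_of_skew (inner_PsiT_left U Vv hJ hDJ) (projD_PsiT U Vv hDJ)
  have hω U Vv : der2 (PsiT J D U Vv) (omForm J D) = 0 :=
    der2_comp_of_commute (hh U Vv) (PsiT_map_comm U Vv hDJ)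
  refine ⟨fun U Vv X Y Z W => ?_, fun U Vv X Y Z W => ?_⟩
  · rw [dotRS, der4_form4_PiT_eq_zero (hg U Vv) (hΩ U Vv)]
    rfl
  · rw [dotRS, der4_form4_PhiT_eq_zero (hg U Vv) (hΩ U Vv) (hh U Vv) (hω U Vv)]
    rfl

theorem stmt_2 {V : Type*} [NormedAddCommGroup V] [InnerProductSpace ℝ V]
    [FiniteDimensional ℝ V]
    (J : V →ₗ[ℝ] V) (hJ2 : ∀ X : V, J (J X) = -X)
    (hJg : ∀ X Y : V, ⟪J X, J Y⟫ = ⟪X, Y⟫)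
    (D : Submodule ℝ V) (hD2 : Module.finrank ℝ ↥D = 2)
    (hJD : ∀ X ∈ D, J X ∈ D) :
    (∀ U Vv X Y Z W : V, dotRS (PsiT J D) (PiT J) U Vv X Y Z W = 0) ∧
    (∀ U Vv X Y Z W : V, dotRS (PsiT J D) (PhiT J D) U Vv X Y Z W = 0) :=
  stmt_2_general J hJ2 hJg D hJD
end
end

section
/- The derivation action of Π on itself vanishes: Π.Π = 0. -/
open scoped RealInnerProductSpace

noncomputable section

variable {V : Type*} [NormedAddCommGroup V] [InnerProductSpace ℝ V] [FiniteDimensional ℝ V]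

/-! `Π(U,V)` is skew-adjoint and commutes with `J`, so it annihilates both `g` and
`ω = ⟪J·,·⟫`. Since `Π₀` is a quadratic polynomial in `g` and `ω`, the Leibniz rule gives
`Π(U,V).Π₀ = 0`. -/

section

variable {E : Type*} [NormedAddCommGroup E] [InnerProductSpace ℝ E]

theorem inner_apply_right_eq_neg_inner_apply_left {J : E →ₗ[ℝ] E}
    (hJ2 : ∀ X, J (J X) = -X) (hJg : ∀ X Y : E, ⟪J X, J Y⟫ = ⟪X, Y⟫) (X Y : E) :
    ⟪X, J Y⟫ = -⟪J X, Y⟫ := by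
  rw [← hJg X (J Y), hJ2, inner_neg_right]

theorem form4_piT (J : E →ₗ[ℝ] E) (X Y Z W : E) :
    form4 (PiT J) X Y Z W = (1/4 : ℝ) * (⟪Y, Z⟫ * ⟪X, W⟫ - ⟪X, Z⟫ * ⟪Y, W⟫
      + ⟪J Y, Z⟫ * ⟪J X, W⟫ - ⟪J X, Z⟫ * ⟪J Y, W⟫ - 2 * ⟪J X, Y⟫ * ⟪J Z, W⟫) := by
  simp only [form4, PiT, real_inner_smul_left, inner_add_left, inner_sub_left]

theorem der4_form4_piT_eq_zero (J : E →ₗ[ℝ] E) {A : E → E}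
    (hA : ∀ X Y, ⟪A X, Y⟫ = -⟪X, A Y⟫) (hAJ : ∀ X, A (J X) = J (A X)) (X Y Z W : E) :
    der4 A (form4 (PiT J)) X Y Z W = 0 := by
  have hAω : ∀ X Y, ⟪J (A X), Y⟫ = -⟪J X, A Y⟫ := fun X Y => by rw [← hAJ, hA]
  simp only [der4, form4_piT, hA, hAω]
  ring

variable {J : E →ₗ[ℝ] E} (hJ2 : ∀ X, J (J X) = -X) (hJg : ∀ X Y : E, ⟪J X, J Y⟫ = ⟪X, Y⟫)
include hJ2 hJg

theorem inner_piT_apply_left (U V X Y : E) :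
    ⟪PiT J U V X, Y⟫ = -⟪X, PiT J U V Y⟫ := by
  have hJ := inner_apply_right_eq_neg_inner_apply_left hJ2 hJg
  simp only [PiT, real_inner_smul_left, real_inner_smul_right, inner_add_left, inner_sub_left,
    inner_add_right, inner_sub_right]
  rw [real_inner_comm X U, real_inner_comm X V, real_inner_comm X (J U), real_inner_comm X (J V),
    hJ X Y]
  ring

theorem piT_apply_J (U V W : E) : PiT J U V (J W) = J (PiT J U V W) := by
  have hJ := inner_apply_right_eq_neg_inner_apply_left hJ2 hJg
  simp only [PiT, map_smul, map_add, map_sub, hJ2, hJg, hJ]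
  module

end

theorem stmt_6_general {V : Type*} [NormedAddCommGroup V] [InnerProductSpace ℝ V]
    (J : V →ₗ[ℝ] V) (hJ2 : ∀ X : V, J (J X) = -X)
    (hJg : ∀ X Y : V, ⟪J X, J Y⟫ = ⟪X, Y⟫) :
    ∀ U Vv X Y Z W : V,
      dotRS (PiT J) (PiT J) U Vv X Y Z W = 0 :=
  fun U Vv => der4_form4_piT_eq_zero J (inner_piT_apply_left hJ2 hJg U Vv)
    (piT_apply_J hJ2 hJg U Vv)

theorem stmt_6 {V : Type*} [NormedAddCommGroup V] [InnerProductSpace ℝ V]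
    [FiniteDimensional ℝ V]
    (J : V →ₗ[ℝ] V) (hJ2 : ∀ X : V, J (J X) = -X)
    (hJg : ∀ X Y : V, ⟪J X, J Y⟫ = ⟪X, Y⟫) :
    ∀ U Vv X Y Z W : V,
      dotRS (PiT J) (PiT J) U Vv X Y Z W = 0 :=
  stmt_6_general J hJ2 hJg
end
end

section
/- The tensor R = Π − 2Φ satisfies R.R = 0, i.e., (Π − 2Φ).(Π − 2Φ) = 0. -/
open scoped RealInnerProductSpace

noncomputable section

variable {V : Type*} [NormedAddCommGroup V] [InnerProductSpace ℝ V] [FiniteDimensional ℝ V]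

/-
Splitting `V = Dᗮ ⊕ D`, the tensor `Π - 2Φ` is `Π` on `Dᗮ` plus `-Π` on `D`: with
`h_E(a, b) = ⟪π_E a, π_E b⟫` and `K` the Kähler curvature form,
`4 ⟪(Π - 2Φ)(X,Y)Z, W⟫ = K(h_{Dᗮ}) - K(h_D)`. Read off this formula, every `A = (Π - 2Φ)(U,V)`
is skew and commutes with `J`, `π_D` and `π_{Dᗮ}`, so as a derivation it preserves `h_E` and
`h_E(J·,·)` for `E = D, Dᗮ`, and such a derivation annihilates `K(h_E)`.
-/

section KahlerForm

variable {M : Type*} [AddCommGroup M] [Module ℝ M] (J : M →ₗ[ℝ] M) (B : LinearMap.BilinForm ℝ M)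

/-- For `B = ⟪·,·⟫` this is `4⟪Π(X,Y)Z, W⟫`. -/
def kahlerForm (X Y Z W : M) : ℝ :=
  B Y Z * B X W - B X Z * B Y W + B (J Y) Z * B (J X) W - B (J X) Z * B (J Y) W
    - 2 * B (J X) Y * B (J Z) W

variable {J B}

theorem kahlerForm_swap (hJ2 : ∀ x, J (J x) = -x) (hB : ∀ a b, B a b = B b a)
    (hBJ : ∀ a b, B (J a) (J b) = B a b) (X Y Z W : M) :
    kahlerForm J B X Y W Z = -kahlerForm J B X Y Z W := by
  have hΩ (a b : M) : B (J a) b = -B (J b) a := by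
    rw [← hBJ (J a) b, hJ2, map_neg, LinearMap.neg_apply, hB]
  simp only [kahlerForm, hΩ W Z]
  rw [hB Y W, hB X W, hB Y Z, hB X Z, hB (J Y) W, hB (J X) W, hB (J Y) Z, hB (J X) Z]
  ring

theorem kahlerForm_map_third (hJ2 : ∀ x, J (J x) = -x)
    (hBJ : ∀ a b, B (J a) (J b) = B a b) (X Y Z W : M) :
    kahlerForm J B X Y (J Z) W = -kahlerForm J B X Y Z (J W) := by
  have hJJ (a b : M) : B (J (J a)) b = -B a b := by rw [hJ2, map_neg, LinearMap.neg_apply]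
  have hright (a b : M) : B a (J b) = -B (J a) b := by rw [← hBJ a (J b), hJ2, map_neg]
  simp only [kahlerForm, hright, hJJ]
  ring

theorem kahlerForm_proj_third (P : M → M) (hPJ : ∀ a, P (J a) = J (P a)) (c : ℝ)
    (hl : ∀ a b, B (P a) b = c * B a b) (hr : ∀ a b, B a (P b) = c * B a b) (X Y Z W : M) :
    kahlerForm J B X Y (P Z) W = kahlerForm J B X Y Z (P W) := by
  simp only [kahlerForm, ← hPJ, hl, hr]
  ring

theorem der4_kahlerForm (A : M → M) (hA : ∀ a b, B (A a) b = -B a (A b))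
    (hAJ : ∀ a b, B (J (A a)) b = -B (J a) (A b)) (X Y Z W : M) :
    der4 A (kahlerForm J B) X Y Z W = 0 := by
  simp only [der4, kahlerForm, hA, hAJ]
  ring

end KahlerForm

section ComplexStructure

variable {V : Type*} [NormedAddCommGroup V] [InnerProductSpace ℝ V] {J : V →ₗ[ℝ] V}
  (hJ2 : ∀ x, J (J x) = -x) (hJg : ∀ x y, ⟪J x, J y⟫ = ⟪x, y⟫)
include hJ2 hJg

theorem inner_map_left_eq_neg_s13 (x y : V) : ⟪J x, y⟫ = -⟪x, J y⟫ := by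
  rw [← hJg x (J y), hJ2, inner_neg_right, neg_neg]

theorem map_mem_orthogonal {E : Submodule ℝ V} (hJE : ∀ x ∈ E, J x ∈ E) {x : V} (hx : x ∈ Eᗮ) :
    J x ∈ Eᗮ := fun u hu => by
  rw [← neg_eq_zero, ← inner_map_left_eq_neg_s13 hJ2 hJg]
  exact Submodule.inner_right_of_mem_orthogonal (hJE u hu) hx

theorem starProjection_map_comm {E : Submodule ℝ V} [E.HasOrthogonalProjection]
    (hJE : ∀ x ∈ E, J x ∈ E) (x : V) : E.starProjection (J x) = J (E.starProjection x) :=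
  Submodule.eq_starProjection_of_mem_orthogonal' (hJE _ (E.starProjection_apply_mem x))
    (map_mem_orthogonal hJ2 hJg hJE (E.sub_starProjection_mem_orthogonal x))
    (by rw [← map_add, add_sub_cancel])

end ComplexStructure

section InnerProj

variable {V : Type*} [NormedAddCommGroup V] [InnerProductSpace ℝ V]

def innerProj (E : Submodule ℝ V) [E.HasOrthogonalProjection] :
    LinearMap.BilinForm ℝ V :=
  (innerₗ V).compl₁₂ E.starProjection.toLinearMap E.starProjection.toLinearMap

variable (E : Submodule ℝ V) [E.HasOrthogonalProjection]

@[simp]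
theorem innerProj_apply (a b : V) :
    innerProj E a b = ⟪E.starProjection a, E.starProjection b⟫ := rfl

theorem innerProj_comm (a b : V) : innerProj E a b = innerProj E b a := real_inner_comm _ _

theorem innerProj_eq_inner_starProjection (a b : V) :
    innerProj E a b = ⟪a, E.starProjection b⟫ := by
  rw [innerProj_apply, E.inner_starProjection_left_eq_right,
    Submodule.starProjection_eq_self_iff.mpr (E.starProjection_apply_mem b)]

theorem innerProj_starProjection_left (a b : V) :
    innerProj E (E.starProjection a) b = innerProj E a b := by
  rw [innerProj_apply, Submodule.starProjection_eq_self_iff.mpr (E.starProjection_apply_mem a),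
    innerProj_apply]

theorem innerProj_starProjection_right (a b : V) :
    innerProj E a (E.starProjection b) = innerProj E a b := by
  rw [innerProj_comm, innerProj_starProjection_left, innerProj_comm]

theorem innerProj_starProjection_left_of_isOrtho {F : Submodule ℝ V} [F.HasOrthogonalProjection]
    (hFE : F ⟂ E) (a b : V) : innerProj E (F.starProjection a) b = 0 := by
  rw [innerProj_apply, (E.starProjection_apply_eq_zero_iff).mpr
    (hFE.le (F.starProjection_apply_mem a)), inner_zero_left]

theorem innerProj_starProjection_right_of_isOrtho {F : Submodule ℝ V} [F.HasOrthogonalProjection]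
    (hFE : F ⟂ E) (a b : V) : innerProj E a (F.starProjection b) = 0 := by
  rw [innerProj_comm, innerProj_starProjection_left_of_isOrtho E hFE]

theorem innerProj_skew_of_inner_eq {A : V → V} {S : V → V → ℝ} (hA : ∀ z w, ⟪A z, w⟫ = S z w)
    (hS : ∀ z w, S w z = -S z w)
    (hSP : ∀ z w, S (E.starProjection z) w = S z (E.starProjection w)) (a b : V) :
    innerProj E (A a) b = -innerProj E a (A b) := by
  rw [innerProj_comm E a, innerProj_eq_inner_starProjection, innerProj_eq_inner_starProjection,
    hA, hA, ← hSP, hS]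

variable {J : V →ₗ[ℝ] V} (hJ2 : ∀ x, J (J x) = -x) (hJg : ∀ x y, ⟪J x, J y⟫ = ⟪x, y⟫)
include hJ2 hJg

theorem innerProj_map_map (hJE : ∀ x ∈ E, J x ∈ E) (a b : V) :
    innerProj E (J a) (J b) = innerProj E a b := by
  simp only [innerProj_apply, starProjection_map_comm hJ2 hJg hJE, hJg]

theorem innerProj_map_skew_of_inner_eq {A : V → V} {S : V → V → ℝ}
    (hA : ∀ z w, ⟪A z, w⟫ = S z w) (hS : ∀ z w, S w z = -S z w)
    (hSJ : ∀ z w, S (J z) w = -S z (J w))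
    (hSP : ∀ z w, S (E.starProjection z) w = S z (E.starProjection w)) (a b : V) :
    innerProj E (J (A a)) b = -innerProj E (J a) (A b) := by
  rw [innerProj_comm E (J a), innerProj_eq_inner_starProjection, innerProj_eq_inner_starProjection,
    inner_map_left_eq_neg_s13 hJ2 hJg, hA, hA, ← neg_neg (S a _), ← hSJ, ← hSP, hS, neg_neg]

theorem kahlerForm_innerProj_swap (hJE : ∀ x ∈ E, J x ∈ E) (X Y Z W : V) :
    kahlerForm J (innerProj E) X Y W Z = -kahlerForm J (innerProj E) X Y Z W :=
  kahlerForm_swap hJ2 (innerProj_comm E) (innerProj_map_map E hJ2 hJg hJE) X Y Z W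

theorem kahlerForm_innerProj_map_third (hJE : ∀ x ∈ E, J x ∈ E) (X Y Z W : V) :
    kahlerForm J (innerProj E) X Y (J Z) W = -kahlerForm J (innerProj E) X Y Z (J W) :=
  kahlerForm_map_third hJ2 (innerProj_map_map E hJ2 hJg hJE) X Y Z W

theorem kahlerForm_innerProj_starProjection_third {F : Submodule ℝ V} [F.HasOrthogonalProjection]
    (hF : F = E ∨ F ⟂ E) (hJF : ∀ x ∈ F, J x ∈ F) (X Y Z W : V) :
    kahlerForm J (innerProj E) X Y (F.starProjection Z) W
      = kahlerForm J (innerProj E) X Y Z (F.starProjection W) := by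
  rcases hF with rfl | hFE
  · exact kahlerForm_proj_third _ (starProjection_map_comm hJ2 hJg hJF) 1
      (by simpa using innerProj_starProjection_left F)
      (by simpa using innerProj_starProjection_right F) X Y Z W
  · exact kahlerForm_proj_third _ (starProjection_map_comm hJ2 hJg hJF) 0
      (by simpa using innerProj_starProjection_left_of_isOrtho E hFE)
      (by simpa using innerProj_starProjection_right_of_isOrtho E hFE) X Y Z W

end InnerProj

section PiSubTwoPhi

variable {V : Type*} [NormedAddCommGroup V] [InnerProductSpace ℝ V] [FiniteDimensional ℝ V]

def piSubTwoPhi (J : V →ₗ[ℝ] V) (D : Submodule ℝ V) (U Vv W : V) : V :=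
  PiT J U Vv W - (2 : ℝ) • PhiT J D U Vv W

variable {J : V →ₗ[ℝ] V} (hJ2 : ∀ x, J (J x) = -x) (hJg : ∀ x y, ⟪J x, J y⟫ = ⟪x, y⟫)
  {D : Submodule ℝ V} (hJD : ∀ x ∈ D, J x ∈ D)
include hJ2 hJg hJD

theorem form4_piSubTwoPhi (X Y Z W : V) :
    form4 (piSubTwoPhi J D) X Y Z W
      = (kahlerForm J (innerProj Dᗮ) X Y Z W - kahlerForm J (innerProj D) X Y Z W) / 4 := by
  have hsym (a b : V) : ⟪a, D.starProjection b⟫ = ⟪D.starProjection a, b⟫ :=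
    (D.inner_starProjection_left_eq_right a b).symm
  have hidem (a : V) : D.starProjection (D.starProjection a) = D.starProjection a :=
    Submodule.starProjection_eq_self_iff.mpr (D.starProjection_apply_mem a)
  have hprojD : projD D = D.starProjection := rfl
  simp only [form4, piSubTwoPhi, PiT, PhiT, hForm, omForm, kahlerForm, innerProj_apply, hprojD,
    Submodule.starProjection_orthogonal_val]
  simp only [inner_add_left, inner_sub_left, inner_sub_right, real_inner_smul_left, map_sub,
    starProjection_map_comm hJ2 hJg hJD, hidem, hsym]
  ring

theorem form4_piSubTwoPhi_swap (U Vv Z W : V) :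
    form4 (piSubTwoPhi J D) U Vv W Z = -form4 (piSubTwoPhi J D) U Vv Z W := by
  rw [form4_piSubTwoPhi hJ2 hJg hJD, form4_piSubTwoPhi hJ2 hJg hJD,
    kahlerForm_innerProj_swap D hJ2 hJg hJD,
    kahlerForm_innerProj_swap Dᗮ hJ2 hJg (fun _ => map_mem_orthogonal hJ2 hJg hJD)]
  ring

theorem form4_piSubTwoPhi_map_third (U Vv Z W : V) :
    form4 (piSubTwoPhi J D) U Vv (J Z) W = -form4 (piSubTwoPhi J D) U Vv Z (J W) := by
  rw [form4_piSubTwoPhi hJ2 hJg hJD, form4_piSubTwoPhi hJ2 hJg hJD,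
    kahlerForm_innerProj_map_third D hJ2 hJg hJD,
    kahlerForm_innerProj_map_third Dᗮ hJ2 hJg (fun _ => map_mem_orthogonal hJ2 hJg hJD)]
  ring

theorem form4_piSubTwoPhi_starProjection_third {E : Submodule ℝ V} (hE : E = D ∨ E = Dᗮ)
    (U Vv Z W : V) :
    form4 (piSubTwoPhi J D) U Vv (E.starProjection Z) W
      = form4 (piSubTwoPhi J D) U Vv Z (E.starProjection W) := by
  rcases hE with hE | hE <;> subst E
  · simp only [form4_piSubTwoPhi hJ2 hJg hJD,
      kahlerForm_innerProj_starProjection_third D hJ2 hJg (.inl rfl) hJD,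
      kahlerForm_innerProj_starProjection_third Dᗮ hJ2 hJg (.inr D.isOrtho_orthogonal_right) hJD]
  · have hJDo := fun x => map_mem_orthogonal hJ2 hJg hJD (x := x)
    simp only [form4_piSubTwoPhi hJ2 hJg hJD,
        kahlerForm_innerProj_starProjection_third D hJ2 hJg (.inr D.isOrtho_orthogonal_left) hJDo,
        kahlerForm_innerProj_starProjection_third Dᗮ hJ2 hJg (.inl rfl) hJDo]

theorem der4_form4_piSubTwoPhi (A : V → V) (X Y Z W : V) :
    der4 A (form4 (piSubTwoPhi J D)) X Y Z W
      = (der4 A (kahlerForm J (innerProj Dᗮ)) X Y Z W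
          - der4 A (kahlerForm J (innerProj D)) X Y Z W) / 4 := by
  simp only [der4, form4_piSubTwoPhi hJ2 hJg hJD]
  ring

theorem der4_piSubTwoPhi_kahlerForm {E : Submodule ℝ V} (hE : E = D ∨ E = Dᗮ)
    (U Vv X Y Z W : V) :
    der4 (piSubTwoPhi J D U Vv) (kahlerForm J (innerProj E)) X Y Z W = 0 :=
  der4_kahlerForm _
    (innerProj_skew_of_inner_eq E (fun _ _ => rfl) (form4_piSubTwoPhi_swap hJ2 hJg hJD U Vv)
      (form4_piSubTwoPhi_starProjection_third hJ2 hJg hJD hE U Vv))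
    (innerProj_map_skew_of_inner_eq E hJ2 hJg (fun _ _ => rfl)
      (form4_piSubTwoPhi_swap hJ2 hJg hJD U Vv) (form4_piSubTwoPhi_map_third hJ2 hJg hJD U Vv)
      (form4_piSubTwoPhi_starProjection_third hJ2 hJg hJD hE U Vv)) X Y Z W

end PiSubTwoPhi

theorem stmt_13_general {V : Type*} [NormedAddCommGroup V] [InnerProductSpace ℝ V]
    [FiniteDimensional ℝ V]
    (J : V →ₗ[ℝ] V) (hJ2 : ∀ X : V, J (J X) = -X)
    (hJg : ∀ X Y : V, ⟪J X, J Y⟫ = ⟪X, Y⟫)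
    (D : Submodule ℝ V)
    (hJD : ∀ X ∈ D, J X ∈ D) :
    ∀ U Vv X Y Z W : V,
      dotRS (fun P Q W0 => PiT J P Q W0 - (2 : ℝ) • PhiT J D P Q W0) (fun P Q W0 => PiT J P Q W0 - (2 : ℝ) • PhiT J D P Q W0) U Vv X Y Z W = 0 := by
  intro U Vv X Y Z W
  change der4 (piSubTwoPhi J D U Vv) (form4 (piSubTwoPhi J D)) X Y Z W = 0
  rw [der4_form4_piSubTwoPhi hJ2 hJg hJD, der4_piSubTwoPhi_kahlerForm hJ2 hJg hJD (.inl rfl),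
    der4_piSubTwoPhi_kahlerForm hJ2 hJg hJD (.inr rfl), sub_zero, zero_div]

theorem stmt_13 {V : Type*} [NormedAddCommGroup V] [InnerProductSpace ℝ V]
    [FiniteDimensional ℝ V]
    (J : V →ₗ[ℝ] V) (hJ2 : ∀ X : V, J (J X) = -X)
    (hJg : ∀ X Y : V, ⟪J X, J Y⟫ = ⟪X, Y⟫)
    (D : Submodule ℝ V) (hD2 : Module.finrank ℝ ↥D = 2)
    (hJD : ∀ X ∈ D, J X ∈ D) :
    ∀ U Vv X Y Z W : V,
      dotRS (fun P Q W0 => PiT J P Q W0 - (2 : ℝ) • PhiT J D P Q W0) (fun P Q W0 => PiT J P Q W0 - (2 : ℝ) • PhiT J D P Q W0) U Vv X Y Z W = 0 :=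
  stmt_13_general J hJ2 hJg D hJD
end
end

section
/- For every real number d, the tensor R = Π − 2Φ + d·Ψ satisfies R.R = 0. -/
open scoped RealInnerProductSpace

noncomputable section

variable {V : Type*} [NormedAddCommGroup V] [InnerProductSpace ℝ V] [FiniteDimensional ℝ V]

/-! Call an endomorphism `A` an infinitesimal automorphism of `(⟪·,·⟫, J, D)` if it is
skew-adjoint and commutes with `J` and `π`. Such an `A` acts as a derivation on every tensor
built from `⟪·,·⟫`, `J` and `π`, so `A (R(X,Y)Z) = R(AX,Y)Z + R(X,AY)Z + R(X,Y)(AZ)`, which is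
`A.R₀ = 0`. It remains to see that each `R(U,V)` is an infinitesimal automorphism. Skewness and
`J`-linearity are visible term by term. Commuting with `π` is not (neither `Π` nor `Φ` alone
has it): writing `U = U₁ + U₂` along `V = D ⊕ Dᗮ`, `Π(U,V) − 2Φ(U,V)` is `Π(U₂,V₂)` on `Dᗮ`
minus `Π(U₁,V₁)` on `D`, and `Ψ(U,V)` is a multiple of `J` on `D`. -/

omit [FiniteDimensional ℝ V] in
lemma Submodule.starProjection_starProjection (K : Submodule ℝ V) [K.HasOrthogonalProjection]
    (x : V) : K.starProjection (K.starProjection x) = K.starProjection x :=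
  K.starProjection_eq_self_iff.2 (K.starProjection_apply_mem x)

lemma projD_eq_starProjection (D : Submodule ℝ V) : projD D = D.starProjection := rfl

lemma hForm_eq_inner (D : Submodule ℝ V) (X Y : V) : hForm D X Y = ⟪D.starProjection X, Y⟫ := by
  rw [hForm, projD_eq_starProjection, ← Submodule.inner_starProjection_left_eq_right,
    Submodule.starProjection_starProjection]

section ComplexStructure

variable {J : V →ₗ[ℝ] V} (hJ2 : ∀ X : V, J (J X) = -X) (hJg : ∀ X Y : V, ⟪J X, J Y⟫ = ⟪X, Y⟫)
include hJ2 hJg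

omit [FiniteDimensional ℝ V] in
lemma inner_J_right (a b : V) : ⟪a, J b⟫ = -⟪J a, b⟫ := by
  have h := hJg a (J b)
  rw [hJ2, inner_neg_right] at h
  linarith

omit [FiniteDimensional ℝ V] in
lemma inner_J_self (a : V) : ⟪J a, a⟫ = 0 := by
  have h := inner_J_right hJ2 hJg a a
  rw [real_inner_comm] at h
  linarith

variable {D : Submodule ℝ V} (hJD : ∀ X ∈ D, J X ∈ D)
include hJD

lemma starProjection_J (x : V) : D.starProjection (J x) = J (D.starProjection x) := by
  refine D.eq_starProjection_of_mem_of_inner_eq_zero (hJD _ (D.starProjection_apply_mem x))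
    fun w hw => ?_
  rw [← map_sub, real_inner_comm, inner_J_right hJ2 hJg, real_inner_comm,
    D.starProjection_inner_eq_zero _ _ (hJD w hw), neg_zero]

lemma inner_J_starProjection_self (a : V) : ⟪J (D.starProjection a), a⟫ = 0 :=
  calc ⟪J (D.starProjection a), a⟫ = ⟪D.starProjection (J (D.starProjection a)), a⟫ := by
        rw [D.starProjection_eq_self_iff.2 (hJD _ (D.starProjection_apply_mem a))]
    _ = ⟪J (D.starProjection a), D.starProjection a⟫ := D.inner_starProjection_left_eq_right _ _
    _ = 0 := inner_J_self hJ2 hJg _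

end ComplexStructure

omit [FiniteDimensional ℝ V] in
lemma inner_map_eq_neg_of_inner_map_self_eq_zero (A : V →ₗ[ℝ] V) (hA : ∀ x, ⟪A x, x⟫ = 0)
    (x y : V) : ⟪A x, y⟫ = -⟪x, A y⟫ := by
  have h := hA (x + y)
  simp only [map_add, inner_add_left, inner_add_right, hA] at h
  rw [real_inner_comm (A y) x]
  linarith

omit [FiniteDimensional ℝ V] in
lemma der4_form4_eq_zero_of_derivation (A : V → V) (S : V → V → V → V)
    (hA : ∀ x y, ⟪A x, y⟫ = -⟪x, A y⟫)
    (hS : ∀ X Y Z, A (S X Y Z) = S (A X) Y Z + S X (A Y) Z + S X Y (A Z)) (X Y Z W : V) :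
    der4 A (form4 S) X Y Z W = 0 := by
  have h := congrArg (⟪·, W⟫) (hS X Y Z)
  simp only [inner_add_left, hA] at h
  simp only [der4, form4]
  linarith

structure IsInfinitesimalAutomorphism (J : V →ₗ[ℝ] V) (D : Submodule ℝ V) (A : V →ₗ[ℝ] V) :
    Prop where
  skew : ∀ x y, ⟪A x, y⟫ = -⟪x, A y⟫
  commute_J : ∀ x, J (A x) = A (J x)
  commute_starProjection : ∀ x, D.starProjection (A x) = A (D.starProjection x)

def curvatureR (J : V →ₗ[ℝ] V) (D : Submodule ℝ V) (d : ℝ) (U Vv W : V) : V :=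
  PiT J U Vv W - (2 : ℝ) • PhiT J D U Vv W + d • PsiT J D U Vv W

def curvatureOp (J : V →ₗ[ℝ] V) (D : Submodule ℝ V) (d : ℝ) (U Vv : V) : V →ₗ[ℝ] V where
  toFun := curvatureR J D d U Vv
  map_add' X Y := by
    simp only [curvatureR, PiT, PhiT, PsiT, omForm, hForm_eq_inner, projD_eq_starProjection,
      inner_add_right, map_add]
    module
  map_smul' c X := by
    simp only [curvatureR, PiT, PhiT, PsiT, omForm, hForm_eq_inner, projD_eq_starProjection,
      real_inner_smul_right, map_smul, RingHom.id_apply]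
    module

section Curvature

variable {J : V →ₗ[ℝ] V} (hJ2 : ∀ X : V, J (J X) = -X) (hJg : ∀ X Y : V, ⟪J X, J Y⟫ = ⟪X, Y⟫)
  {D : Submodule ℝ V} (hJD : ∀ X ∈ D, J X ∈ D)
include hJ2 hJg hJD

lemma curvatureR_inner_self (d : ℝ) (U Vv W : V) : ⟪curvatureR J D d U Vv W, W⟫ = 0 := by
  simp only [curvatureR, PiT, PhiT, PsiT, omForm, hForm_eq_inner, projD_eq_starProjection,
    inner_add_left, inner_sub_left, real_inner_smul_left, starProjection_J hJ2 hJg hJD,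
    inner_J_self hJ2 hJg, inner_J_starProjection_self hJ2 hJg hJD]
  ring

lemma curvatureR_J (d : ℝ) (U Vv W : V) :
    curvatureR J D d U Vv (J W) = J (curvatureR J D d U Vv W) := by
  simp only [curvatureR, PiT, PhiT, PsiT, omForm, hForm_eq_inner, projD_eq_starProjection,
    map_add, map_sub, map_smul, map_neg, inner_neg_left, inner_J_right hJ2 hJg, hJ2,
    starProjection_J hJ2 hJg hJD]
  module

lemma curvatureR_starProjection (d : ℝ) (U Vv W : V) :
    curvatureR J D d U Vv (D.starProjection W) = D.starProjection (curvatureR J D d U Vv W) := by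
  simp only [curvatureR, PiT, PhiT, PsiT, omForm, hForm_eq_inner, projD_eq_starProjection,
    map_add, map_sub, map_smul, ← D.inner_starProjection_left_eq_right,
    Submodule.starProjection_starProjection, starProjection_J hJ2 hJg hJD]
  module

lemma isInfinitesimalAutomorphism_curvatureOp (d : ℝ) (U Vv : V) :
    IsInfinitesimalAutomorphism J D (curvatureOp J D d U Vv) where
  skew := inner_map_eq_neg_of_inner_map_self_eq_zero _ (curvatureR_inner_self hJ2 hJg hJD d U Vv)
  commute_J W := (curvatureR_J hJ2 hJg hJD d U Vv W).symm
  commute_starProjection W := (curvatureR_starProjection hJ2 hJg hJD d U Vv W).symm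

lemma IsInfinitesimalAutomorphism.map_curvatureR {A : V →ₗ[ℝ] V}
    (hA : IsInfinitesimalAutomorphism J D A) (d : ℝ) (X Y Z : V) :
    A (curvatureR J D d X Y Z) = curvatureR J D d (A X) Y Z + curvatureR J D d X (A Y) Z
      + curvatureR J D d X Y (A Z) := by
  simp only [curvatureR, PiT, PhiT, PsiT, omForm, hForm_eq_inner, projD_eq_starProjection,
    map_add, map_sub, map_smul, starProjection_J hJ2 hJg hJD, hA.commute_J,
    hA.commute_starProjection, hA.skew]
  module

end Curvature

theorem stmt_14_general {V : Type*} [NormedAddCommGroup V] [InnerProductSpace ℝ V]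
    [FiniteDimensional ℝ V]
    (J : V →ₗ[ℝ] V) (hJ2 : ∀ X : V, J (J X) = -X)
    (hJg : ∀ X Y : V, ⟪J X, J Y⟫ = ⟪X, Y⟫)
    (D : Submodule ℝ V)
    (hJD : ∀ X ∈ D, J X ∈ D) :
    ∀ d : ℝ, ∀ U Vv X Y Z W : V,
      dotRS (fun P Q W0 => PiT J P Q W0 - (2 : ℝ) • PhiT J D P Q W0 + d • PsiT J D P Q W0)
        (fun P Q W0 => PiT J P Q W0 - (2 : ℝ) • PhiT J D P Q W0 + d • PsiT J D P Q W0) U Vv X Y Z W = 0 := by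
  intro d U Vv X Y Z W
  have hR := isInfinitesimalAutomorphism_curvatureOp hJ2 hJg hJD d U Vv
  exact der4_form4_eq_zero_of_derivation _ (curvatureR J D d) hR.skew
    (hR.map_curvatureR hJ2 hJg hJD d) X Y Z W

theorem stmt_14 {V : Type*} [NormedAddCommGroup V] [InnerProductSpace ℝ V]
    [FiniteDimensional ℝ V]
    (J : V →ₗ[ℝ] V) (hJ2 : ∀ X : V, J (J X) = -X)
    (hJg : ∀ X Y : V, ⟪J X, J Y⟫ = ⟪X, Y⟫)
    (D : Submodule ℝ V) (hD2 : Module.finrank ℝ ↥D = 2)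
    (hJD : ∀ X ∈ D, J X ∈ D) :
    ∀ d : ℝ, ∀ U Vv X Y Z W : V,
      dotRS (fun P Q W0 => PiT J P Q W0 - (2 : ℝ) • PhiT J D P Q W0 + d • PsiT J D P Q W0)
        (fun P Q W0 => PiT J P Q W0 - (2 : ℝ) • PhiT J D P Q W0 + d • PsiT J D P Q W0) U Vv X Y Z W = 0 :=
  stmt_14_general J hJ2 hJg D hJD
end
end
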